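/- In the autonomous robot PIIS, the single-robot instance T(1) satisfies AG(g₁ → AG g₁): once a robot's position is in the goal region {2,3,4}, it never leaves it on any path. -/
import Mathlib


/-- A template state of the autonomous robot: position `p`, sensor value
`s`, halted flag, and moved flag. -/
structure RState where
  p : ℕ
  s : ℕ
  halted : Bool
  moved : Bool
deriving DecidableEq

/-- The initial state `(0, 0, ⊥, ⊥)`. -/
def RInit : RState := ⟨0, 0, false, false⟩

/-- The transitions of the robot (protocol and evolution combined): the
`null` actions (enabled when `p < 7`, `s < 3`, not halted, not moved) move
the robot one position forward and set the sensor to the new position or to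
the new position plus or minus one; `n_s` (enabled when moved) resets the
moved flag; `halt` (enabled when the sensor reading is at least `3`, not
halted, not moved) halts the robot. -/
inductive RStep : RState → RState → Prop where
  | null {p s : ℕ} : p < 7 → s < 3 →
      RStep ⟨p, s, false, false⟩ ⟨p + 1, p + 1, false, true⟩
  | nullPlus {p s : ℕ} : p < 7 → s < 3 →
      RStep ⟨p, s, false, false⟩ ⟨p + 1, p + 2, false, true⟩
  | nullMinus {p s : ℕ} : p < 7 → s < 3 →
      RStep ⟨p, s, false, false⟩ ⟨p + 1, p, false, true⟩
  | nextStep {p s : ℕ} :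
      RStep ⟨p, s, false, true⟩ ⟨p, s, false, false⟩
  | halt {p s : ℕ} : 3 ≤ s →
      RStep ⟨p, s, false, false⟩ ⟨p, s, true, true⟩

/-- A path of the single-robot instance `T(1)`: at each step the robot
either takes a transition or the (always enabled) joint silent action is
performed, leaving the state unchanged. -/
def RPath (π : ℕ → RState) : Prop :=
  ∀ j, RStep (π j) (π (j + 1)) ∨ π (j + 1) = π j

/-- The atom `g`: the position is in the goal region `{2, 3, 4}`. -/
def goalRegion (x : RState) : Prop := 2 ≤ x.p ∧ x.p ≤ 4

def Jinv (x : RState) : Prop := x.p ≤ x.s + 1 ∧ x.p ≤ 4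

lemma step_J {x y : RState} (h : RStep x y) (hx : Jinv x) : Jinv y := by
  cases h <;> simp_all [Jinv] <;> omega

lemma step_mono {x y : RState} (h : RStep x y) : x.p ≤ y.p := by
  cases h <;> simp

lemma path_J {π : ℕ → RState} (h : RPath π) (h0 : Jinv (π 0)) : ∀ m, Jinv (π m) := by
  intro m
  induction m with
  | zero => exact h0
  | succ n ih =>
    rcases h n with hs | he
    · exact step_J hs ih
    · rwa [he]

lemma path_mono {π : ℕ → RState} (h : RPath π) : ∀ m, (π 0).p ≤ (π m).p := by
  intro m
  induction m with
  | zero => exact le_rfl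
  | succ n ih =>
    rcases h n with hs | he
    · exact ih.trans (step_mono hs)
    · rw [he]; exact ih

/-- The single-robot instance `T(1)` of the autonomous robot satisfies
`AG (g₁ → AG g₁)`: on every path from the initial state, once the robot's
position is in the goal region `{2,3,4}`, it never leaves it on any path. -/
theorem robot_never_exits_goal_region :
    ∀ π : ℕ → RState, RPath π → π 0 = RInit →
      ∀ j, goalRegion (π j) →
        ∀ π' : ℕ → RState, RPath π' → π' 0 = π j →
          ∀ m, goalRegion (π' m) := by
  intro π hπ h0 j hj π' hπ' h0' m
  have hJ0 : Jinv (π 0) := by rw [h0]; exact ⟨by simp [RInit], by simp [RInit]⟩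
  have hJ' : Jinv (π' m) := path_J hπ' (by rw [h0']; exact path_J hπ hJ0 j) m
  have hm : (π' 0).p ≤ (π' m).p := path_mono hπ' m
  rw [h0'] at hm
  exact ⟨hj.1.trans hm, hJ'.2⟩
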